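/- arXiv:2411.15335 — 2 statements merged into one kernel-verified Lean document; each statement's English description precedes it below -/
import Mathlib

section
/- Let u : B₁⁺ → ℝ and suppose there exist constants C > 0, ρ ∈ (0,1), a sequence (a_n) ⊂ ℝ with |a_n − a_{n+1}| ≤ Cρ^n, and a sequence of symmetric matrices (M_n) with ‖M_n − M_{n+1}‖ ≤ C, such that sup_{x ∈ B_{ρ^n}⁺} |u(x) − a_n x_d − M_n x · x| ≤ ρ^{2n} for all n ∈ ℕ. Then there exist a_∞ ∈ ℝ and a constant C' > 0 (depending only on C and ρ) such that for all x ∈ B_{1/2}⁺, |u(x) − a_∞ x_d| ≤ C' |x|² log(1/|x|). -/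
open scoped RealInnerProductSpace
open Real

/-!
The linear coefficients `a n` form a Cauchy sequence with geometric rate, so they converge to some
`a∞` with `|a n - a∞| ≲ ρ ^ n`, while the matrices only drift: `‖M n‖ ≲ 1 + n`. For `x` in the
annulus `ρ ^ (n + 1) ≤ |x| < ρ ^ n` the approximation at scale `n` and the triangle inequality give
`|u x - a∞ x_d| ≲ ρ ^ (2n) + ρ ^ n |x| + n |x|² ≲ (1 + n) |x|²`, and `n ≲ log (1 / |x|)` there.
-/

theorem exists_dist_le_geometric_of_dist_succ_le {α : Type*} [PseudoMetricSpace α]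
    [CompleteSpace α] {C r : ℝ} (hr : r < 1) {f : ℕ → α}
    (hf : ∀ n, dist (f n) (f (n + 1)) ≤ C * r ^ n) :
    ∃ a, ∀ n, dist (f n) a ≤ C * r ^ n / (1 - r) :=
  let ⟨a, ha⟩ := cauchySeq_tendsto_of_complete (cauchySeq_of_le_geometric r C hr hf)
  ⟨a, dist_le_of_le_geometric_of_tendsto r C hr hf ha⟩

theorem norm_le_norm_zero_add_of_norm_sub_succ_le {E : Type*} [SeminormedAddCommGroup E]
    {C : ℝ} {f : ℕ → E} (hf : ∀ n, ‖f n - f (n + 1)‖ ≤ C) (n : ℕ) :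
    ‖f n‖ ≤ ‖f 0‖ + n * C := by
  have hdist : dist (f 0) (f n) ≤ n * C := by
    simpa using dist_le_range_sum_of_dist_le (d := fun _ ↦ C) n fun _ ↦ by
      simpa only [dist_eq_norm] using hf _
  rw [dist_comm, dist_eq_norm] at hdist
  linarith [norm_le_norm_add_norm_sub' (f n) (f 0)]

theorem abs_inner_apply_self_le {E : Type*} [NormedAddCommGroup E] [InnerProductSpace ℝ E]
    (T : E →L[ℝ] E) (x : E) : |⟪T x, x⟫| ≤ ‖T‖ * ‖x‖ ^ 2 :=
  calc |⟪T x, x⟫| ≤ ‖T x‖ * ‖x‖ := abs_real_inner_le_norm _ _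
    _ ≤ ‖T‖ * ‖x‖ * ‖x‖ := by gcongr; exact T.le_opNorm x
    _ = ‖T‖ * ‖x‖ ^ 2 := by ring

theorem exists_pow_succ_le_and_lt_pow {r ρ : ℝ} (hr0 : 0 < r) (hr1 : r < 1) (hρ : ρ < 1) :
    ∃ n : ℕ, ρ ^ (n + 1) ≤ r ∧ r < ρ ^ n := by
  classical
  have hex : ∃ m : ℕ, ρ ^ m ≤ r := (exists_pow_lt_of_lt_one hr0 hρ).imp fun _ ↦ le_of_lt
  obtain ⟨n, hn⟩ : ∃ n, Nat.find hex = n + 1 :=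
    Nat.exists_eq_succ_of_ne_zero fun h ↦ by simpa [h] using (Nat.find_spec hex).trans_lt hr1
  refine ⟨n, hn ▸ Nat.find_spec hex, not_le.mp (Nat.find_min hex ?_)⟩
  omega

theorem nat_mul_neg_log_le_log_one_div {r ρ : ℝ} (hr : 0 < r) {n : ℕ} (hn : r < ρ ^ n) :
    n * -log ρ ≤ log (1 / r) := by
  have : log r ≤ n * log ρ := by
    simpa only [log_pow] using log_le_log hr hn.le
  rw [one_div, log_inv]
  linarith

theorem add_mul_le_mul_log_one_div {K C ρ r : ℝ} (hK : 0 ≤ K) (hC : 0 ≤ C) (hρ0 : 0 < ρ)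
    (hρ1 : ρ < 1) (hr0 : 0 < r) (hr : r ≤ 1 / 2) {n : ℕ} (hn : r < ρ ^ n) :
    K + n * C ≤ (K / log 2 + C / -log ρ) * log (1 / r) := by
  have hlog2 : 0 < log 2 := log_pos one_lt_two
  have hlogρ : 0 < -log ρ := neg_pos.mpr (log_neg hρ0 hρ1)
  have hK' : K ≤ K / log 2 * log (1 / r) := by
    rw [div_mul_eq_mul_div, le_div_iff₀ hlog2]
    gcongr
    rw [le_div_iff₀ hr0]
    linarith
  have hC' : n * C ≤ C / -log ρ * log (1 / r) := by
    rw [div_mul_eq_mul_div, le_div_iff₀ hlogρ, mul_right_comm, mul_comm C]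
    exact mul_le_mul_of_nonneg_right (nat_mul_neg_log_le_log_one_div hr0 hn) hC
  linarith
theorem abs_sub_mul_apply_le_of_approx {ι : Type*} [Fintype ι] {u : EuclideanSpace ℝ ι → ℝ}
    {T : EuclideanSpace ℝ ι →L[ℝ] EuclideanSpace ℝ ι} {x : EuclideanSpace ℝ ι} {i : ι}
    {ρ C B a A : ℝ} {n : ℕ} (hρ0 : 0 < ρ) (hρ1 : ρ < 1) (hC : 0 ≤ C) (hx : ρ ^ (n + 1) ≤ ‖x‖)
    (happrox : |u x - a * x i - ⟪T x, x⟫| ≤ ρ ^ (2 * n)) (ha : |a - A| ≤ C * ρ ^ n / (1 - ρ))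
    (hT : ‖T‖ ≤ B) :
    |u x - A * x i| ≤ (1 / ρ ^ 2 + C / (ρ * (1 - ρ)) + B) * ‖x‖ ^ 2 := by
  have hρn : ρ ^ n ≤ ‖x‖ / ρ := by
    rw [le_div_iff₀ hρ0, ← pow_succ]
    exact hx
  have h_err : ρ ^ (2 * n) ≤ 1 / ρ ^ 2 * ‖x‖ ^ 2 := by
    rw [pow_mul', one_div_mul_eq_div, ← div_pow]
    gcongr
  have h_lin : |a - A| * |x i| ≤ C / (ρ * (1 - ρ)) * ‖x‖ ^ 2 := by
    have h1ρ : 0 < 1 - ρ := sub_pos.mpr hρ1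
    calc |a - A| * |x i| ≤ C * (‖x‖ / ρ) / (1 - ρ) * ‖x‖ := by
          gcongr
          · exact ha.trans (by gcongr)
          · exact PiLp.norm_apply_le x i
      _ = C / (ρ * (1 - ρ)) * ‖x‖ ^ 2 := by field_simp
  have h_quad : |⟪T x, x⟫| ≤ B * ‖x‖ ^ 2 :=
    (abs_inner_apply_self_le T x).trans (by gcongr)
  calc |u x - A * x i|
      = |(u x - a * x i - ⟪T x, x⟫) + (a - A) * x i + ⟪T x, x⟫| := by ring_nf
    _ ≤ |u x - a * x i - ⟪T x, x⟫| + |a - A| * |x i| + |⟪T x, x⟫| := by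
        rw [← abs_mul]; exact abs_add_three _ _ _
    _ ≤ _ := by linarith

theorem stmt_2_general {d : ℕ} (u : EuclideanSpace ℝ (Fin (d + 1)) → ℝ)
    (C ρ : ℝ) (hC : 0 < C) (hρ0 : 0 < ρ) (hρ1 : ρ < 1)
    (a : ℕ → ℝ)
    (M : ℕ → EuclideanSpace ℝ (Fin (d + 1)) →L[ℝ] EuclideanSpace ℝ (Fin (d + 1)))
    (ha : ∀ n, |a n - a (n + 1)| ≤ C * ρ ^ n)
    (hM : ∀ n, ‖M n - M (n + 1)‖ ≤ C)
    (happrox : ∀ n : ℕ, ∀ x : EuclideanSpace ℝ (Fin (d + 1)),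
      ‖x‖ < ρ ^ n → 0 < x (Fin.last d) →
        |u x - a n * x (Fin.last d) - ⟪M n x, x⟫| ≤ ρ ^ (2 * n)) :
    ∃ (aInf C' : ℝ), 0 < C' ∧
      ∀ x : EuclideanSpace ℝ (Fin (d + 1)),
        ‖x‖ < 1 / 2 → 0 < x (Fin.last d) →
          |u x - aInf * x (Fin.last d)| ≤ C' * ‖x‖ ^ 2 * Real.log (1 / ‖x‖) := by
  obtain ⟨aInf, haInf⟩ := exists_dist_le_geometric_of_dist_succ_le hρ1 (f := a) ha
  set K := 1 / ρ ^ 2 + C / (ρ * (1 - ρ)) + ‖M 0‖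
  have hK : 0 < K := by have := sub_pos.mpr hρ1; positivity
  have hlogρ : 0 < -log ρ := neg_pos.mpr (log_neg hρ0 hρ1)
  refine ⟨aInf, K / log 2 + C / -log ρ, by positivity, fun x hx hxd ↦ ?_⟩
  have hx0 : 0 < ‖x‖ := norm_pos_iff.mpr fun h ↦ by simp [h] at hxd
  obtain ⟨n, hlow, hhigh⟩ := exists_pow_succ_le_and_lt_pow hx0 (by linarith) hρ1
  calc |u x - aInf * x (Fin.last d)|
      ≤ (1 / ρ ^ 2 + C / (ρ * (1 - ρ)) + (‖M 0‖ + n * C)) * ‖x‖ ^ 2 :=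
        abs_sub_mul_apply_le_of_approx hρ0 hρ1 hC.le hlow (happrox n x hhigh hxd) (haInf n)
          (norm_le_norm_zero_add_of_norm_sub_succ_le hM n)
    _ = (K + n * C) * ‖x‖ ^ 2 := by ring
    _ ≤ (K / log 2 + C / -log ρ) * log (1 / ‖x‖) * ‖x‖ ^ 2 := by
        gcongr
        exact add_mul_le_mul_log_one_div hK.le hC.le hρ0 hρ1 hx0 hx.le hhigh
    _ = _ := by ring

/-- From the iterative quadratic approximation scheme
`sup_{B_{ρ^n}⁺} |u − a_n x_d − M_n x·x| ≤ ρ^{2n}` with `|a_n − a_{n+1}| ≤ Cρ^n` and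
`‖M_n − M_{n+1}‖ ≤ C`, one gets the `C^{1,Log-Lip}` estimate
`|u(x) − a_∞ x_d| ≤ C' |x|² log(1/|x|)` on `B_{1/2}⁺`. -/
theorem stmt_2 {d : ℕ} (u : EuclideanSpace ℝ (Fin (d + 1)) → ℝ)
    (C ρ : ℝ) (hC : 0 < C) (hρ0 : 0 < ρ) (hρ1 : ρ < 1)
    (a : ℕ → ℝ)
    (M : ℕ → EuclideanSpace ℝ (Fin (d + 1)) →L[ℝ] EuclideanSpace ℝ (Fin (d + 1)))
    (hMsym : ∀ n, IsSelfAdjoint (M n))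
    (ha : ∀ n, |a n - a (n + 1)| ≤ C * ρ ^ n)
    (hM : ∀ n, ‖M n - M (n + 1)‖ ≤ C)
    (happrox : ∀ n : ℕ, ∀ x : EuclideanSpace ℝ (Fin (d + 1)),
      ‖x‖ < ρ ^ n → 0 < x (Fin.last d) →
        |u x - a n * x (Fin.last d) - ⟪M n x, x⟫| ≤ ρ ^ (2 * n)) :
    ∃ (aInf C' : ℝ), 0 < C' ∧
      ∀ x : EuclideanSpace ℝ (Fin (d + 1)),
        ‖x‖ < 1 / 2 → 0 < x (Fin.last d) →
          |u x - aInf * x (Fin.last d)| ≤ C' * ‖x‖ ^ 2 * Real.log (1 / ‖x‖) :=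
  stmt_2_general u C ρ hC hρ0 hρ1 a M ha hM happrox
end

section
/- Let A ⊂ B ⊂ Q₁ be measurable subsets of the unit cube Q₁ ⊂ ℝ^d, and let 0 < σ < 1 satisfy: (1) |A| ≤ σ; (2) whenever Q is a dyadic subcube of Q₁ with |A ∩ Q| > σ|Q|, its dyadic predecessor Q̃ satisfies Q̃ ⊂ B. Then |A| ≤ σ|B|. -/
/-!
Call a dyadic cube `Q` heavy if `|A ∩ Q| > σ|Q|`. Dyadic cubes are balls of the sup metric, so
Lebesgue's density theorem, applied along the dyadic cubes shrinking to `x`, shows that almost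
every point of `A` lies in a heavy cube, while `Q₁` is not heavy because `|A| ≤ σ`. The maximal
light cubes having a heavy child therefore cover `A` up to a null set; they are almost disjoint,
lie in `B` by hypothesis and satisfy `|A ∩ Q| ≤ σ|Q|`, and summing over them gives `|A| ≤ σ|B|`.
-/

open MeasureTheory

/-- The closed dyadic cube of generation `n` with index `m` inside `[0,1]^d`. -/
def dyadicCube (d n : ℕ) (m : Fin d → ℕ) : Set (Fin d → ℝ) :=
  {x | ∀ i, (m i : ℝ) / 2 ^ n ≤ x i ∧ x i ≤ ((m i : ℝ) + 1) / 2 ^ n}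

open Set Metric Filter Function
open scoped ENNReal Topology

theorem MeasureTheory.measure_le_mul_measure_iUnion {α ι : Type*} [MeasurableSpace α]
    [Countable ι] {μ : Measure α} {A : Set α} {Q : ι → Set α}
    (hQ : ∀ i, NullMeasurableSet (Q i) μ) (hdisj : Pairwise (AEDisjoint μ on Q))
    (hcov : A ≤ᵐ[μ] ⋃ i, Q i) {c : ℝ≥0∞} (hc : ∀ i, μ (A ∩ Q i) ≤ c * μ (Q i)) :
    μ A ≤ c * μ (⋃ i, Q i) :=
  calc μ A ≤ μ (A ∩ ⋃ i, Q i) := measure_mono_ae (hcov.mono fun _ hx hA => ⟨hA, hx hA⟩)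
    _ ≤ ∑' i, μ (A ∩ Q i) := by rw [inter_iUnion]; exact measure_iUnion_le _
    _ ≤ ∑' i, c * μ (Q i) := ENNReal.tsum_le_tsum hc
    _ = c * μ (⋃ i, Q i) := by rw [ENNReal.tsum_mul_left, measure_iUnion₀ hdisj hQ]

section Dyadic

variable {d : ℕ}

theorem dyadicCube_eq_Icc (n : ℕ) (m : Fin d → ℕ) :
    dyadicCube d n m = Icc (fun i => (m i : ℝ) / 2 ^ n) (fun i => ((m i : ℝ) + 1) / 2 ^ n) := by
  ext x
  simp [dyadicCube, Pi.le_def, forall_and]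

theorem dyadicCube_eq_closedBall (n : ℕ) (m : Fin d → ℕ) :
    dyadicCube d n m = closedBall (fun i => ((m i : ℝ) + 1 / 2) / 2 ^ n) (1 / 2 ^ (n + 1)) := by
  rw [closedBall_pi _ (by positivity), dyadicCube_eq_Icc, ← pi_univ_Icc]
  refine pi_congr rfl fun i _ => ?_
  rw [Real.closedBall_eq_Icc]
  congr 1 <;> (field_simp; ring)

theorem dyadicCube_zero_zero : dyadicCube d 0 0 = Icc 0 1 := by
  ext x
  simp [dyadicCube_eq_Icc, Pi.le_def]

theorem measurableSet_dyadicCube (n : ℕ) (m : Fin d → ℕ) : MeasurableSet (dyadicCube d n m) := by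
  rw [dyadicCube_eq_Icc]; exact measurableSet_Icc

theorem volume_dyadicCube (n : ℕ) (m : Fin d → ℕ) :
    volume (dyadicCube d n m) = ENNReal.ofReal ((1 / 2 ^ n) ^ d) := by
  rw [dyadicCube_eq_closedBall, Real.volume_pi_closedBall _ (by positivity), Fintype.card_fin]
  congr 2; field_simp; ring

theorem volume_dyadicCube_ne_zero (n : ℕ) (m : Fin d → ℕ) : volume (dyadicCube d n m) ≠ 0 := by
  rw [volume_dyadicCube]; positivity

theorem volume_dyadicCube_ne_top (n : ℕ) (m : Fin d → ℕ) : volume (dyadicCube d n m) ≠ ∞ := by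
  rw [volume_dyadicCube]; exact ENNReal.ofReal_ne_top

/-- For `0 ≤ x`, the index of the half-open dyadic cube of generation `n` containing `x`; it
detects membership in the closed cube up to the null boundary, which makes cubes almost disjoint. -/
noncomputable def dyadicIndex (n : ℕ) (x : Fin d → ℝ) : Fin d → ℕ := fun i => ⌊x i * 2 ^ n⌋₊

theorem dyadicIndex_div_two_pow (x : Fin d → ℝ) {j k : ℕ} (h : j ≤ k) :
    (fun i => dyadicIndex k x i / 2 ^ (k - j)) = dyadicIndex j x := by
  funext i
  have hk : (2 : ℝ) ^ k = 2 ^ j * 2 ^ (k - j) := by rw [← pow_add, Nat.add_sub_cancel' h]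
  rw [dyadicIndex, dyadicIndex, ← Nat.floor_div_natCast, hk]
  push_cast
  rw [← mul_assoc, mul_div_cancel_right₀ _ (by positivity)]

theorem dyadicIndex_succ_div_two (x : Fin d → ℝ) (n : ℕ) :
    (fun i => dyadicIndex (n + 1) x i / 2) = dyadicIndex n x := by
  simpa using dyadicIndex_div_two_pow x n.le_succ

theorem dyadicIndex_lt_two_pow {x : Fin d → ℝ} (hx : dyadicIndex 0 x = 0) (n : ℕ) (i : Fin d) :
    dyadicIndex n x i < 2 ^ n := by
  have := congrFun (dyadicIndex_div_two_pow x n.zero_le) i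
  rw [hx, Pi.zero_apply, Nat.sub_zero, Nat.div_eq_zero_iff] at this
  exact this.resolve_left (by positivity)

theorem mem_dyadicCube_dyadicIndex {x : Fin d → ℝ} (hx : 0 ≤ x) (n : ℕ) :
    x ∈ dyadicCube d n (dyadicIndex n x) := by
  intro i
  have h2n : (0 : ℝ) < 2 ^ n := by positivity
  rw [div_le_iff₀ h2n, le_div_iff₀ h2n]
  exact ⟨Nat.floor_le (mul_nonneg (hx i) h2n.le), (Nat.lt_floor_add_one _).le⟩

theorem dyadicCube_ae_le_dyadicIndex (n : ℕ) (m : Fin d → ℕ) :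
    dyadicCube d n m ≤ᵐ[volume] {x | dyadicIndex n x = m} := by
  rw [dyadicCube_eq_Icc, volume_pi]
  refine Measure.univ_pi_Ico_ae_eq_Icc.symm.le.trans (ae_of_all _ fun x hx => funext fun i => ?_)
  have h2n : (0 : ℝ) < 2 ^ n := by positivity
  obtain ⟨hlo, hhi⟩ := hx i (mem_univ i)
  rw [div_le_iff₀ h2n] at hlo
  rw [lt_div_iff₀ h2n] at hhi
  exact (Nat.floor_eq_iff ((Nat.cast_nonneg _).trans hlo)).2 ⟨hlo, hhi⟩

variable (A : Set (Fin d → ℝ)) (σ : ℝ)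

def IsHeavy (n : ℕ) (m : Fin d → ℕ) : Prop :=
  ENNReal.ofReal σ * volume (dyadicCube d n m) < volume (A ∩ dyadicCube d n m)

def IsLightWithHeavyChild (n : ℕ) (m : Fin d → ℕ) : Prop :=
  ¬IsHeavy A σ n m ∧
    ∃ m' : Fin d → ℕ, (∀ i, m' i < 2 ^ (n + 1)) ∧ (fun i => m' i / 2) = m ∧ IsHeavy A σ (n + 1) m'

/-- `fun i => m i / 2 ^ (n - j)` indexes the ancestor of generation `j`. -/
def stoppingCubes : Set (ℕ × (Fin d → ℕ)) :=
  {p | IsLightWithHeavyChild A σ p.1 p.2 ∧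
    ∀ j < p.1, ¬IsLightWithHeavyChild A σ j (fun i => p.2 i / 2 ^ (p.1 - j))}

variable {A σ}

theorem ae_exists_isHeavy (hσ : σ < 1) :
    ∀ᵐ x ∂volume.restrict A, 0 ≤ x → ∃ n, IsHeavy A σ n (dyadicIndex n x) := by
  filter_upwards [IsUnifLocDoublingMeasure.ae_tendsto_measure_inter_div volume A 1] with x hx hx0
  have hδ : Tendsto (fun n : ℕ => (1 : ℝ) / 2 ^ (n + 1)) atTop (𝓝[>] 0) := by
    refine tendsto_nhdsWithin_iff.2 ⟨?_, Eventually.of_forall fun n => mem_Ioi.2 (by positivity)⟩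
    simp_rw [← one_div_pow]
    exact (tendsto_pow_atTop_nhds_zero_of_lt_one (by norm_num) (by norm_num)).comp
      (tendsto_add_atTop_nat 1)
  have hdensity := hx _ _ hδ (Eventually.of_forall fun n => by
    rw [one_mul, ← dyadicCube_eq_closedBall]; exact mem_dyadicCube_dyadicIndex hx0 n)
  simp_rw [← dyadicCube_eq_closedBall] at hdensity
  obtain ⟨n, hn⟩ := (hdensity.eventually (lt_mem_nhds (ENNReal.ofReal_lt_one.2 hσ))).exists
  exact ⟨n, (ENNReal.lt_div_iff_mul_lt (.inl (volume_dyadicCube_ne_zero _ _))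
    (.inl (volume_dyadicCube_ne_top _ _))).1 hn⟩

theorem exists_mem_stoppingCubes {x : Fin d → ℝ} (hx0 : 0 ≤ x) (hx : dyadicIndex 0 x = 0)
    (hQ₁ : ¬IsHeavy A σ 0 0) (hheavy : ∃ n, IsHeavy A σ n (dyadicIndex n x)) :
    ∃ p ∈ stoppingCubes A σ, x ∈ dyadicCube d p.1 p.2 := by
  classical
  obtain ⟨k, hk⟩ : ∃ k, Nat.find hheavy = k + 1 :=
    Nat.exists_eq_succ_of_ne_zero fun h => hQ₁ (hx ▸ h ▸ Nat.find_spec hheavy)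
  have hsel : ∃ j, IsLightWithHeavyChild A σ j (dyadicIndex j x) :=
    ⟨k, Nat.find_min hheavy (by omega), _, dyadicIndex_lt_two_pow hx _,
      dyadicIndex_succ_div_two x k, hk ▸ Nat.find_spec hheavy⟩
  refine ⟨(Nat.find hsel, dyadicIndex (Nat.find hsel) x), ⟨Nat.find_spec hsel, fun j hj => ?_⟩,
    mem_dyadicCube_dyadicIndex hx0 _⟩
  rw [dyadicIndex_div_two_pow x hj.le]
  exact Nat.find_min hsel hj

theorem stoppingCubes_eq_of_dyadicIndex_eq {p q : ℕ × (Fin d → ℕ)} (hp : p ∈ stoppingCubes A σ)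
    (hq : q ∈ stoppingCubes A σ) (hpq : p.1 ≤ q.1) {x : Fin d → ℝ} (hxp : dyadicIndex p.1 x = p.2)
    (hxq : dyadicIndex q.1 x = q.2) : p = q := by
  have hanc : (fun i => q.2 i / 2 ^ (q.1 - p.1)) = p.2 := by
    rw [← hxp, ← hxq, dyadicIndex_div_two_pow x hpq]
  rcases hpq.eq_or_lt with heq | hlt
  · refine Prod.ext heq ?_
    rw [← hanc, heq]
    simp
  · exact absurd (hanc ▸ hp.1) (hq.2 p.1 hlt)

theorem pairwise_aedisjoint_stoppingCubes :
    Pairwise (AEDisjoint volume on fun p : stoppingCubes A σ => dyadicCube d p.1.1 p.1.2) := by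
  intro p q hpq
  refine AEDisjoint.mono_ae ?_ (dyadicCube_ae_le_dyadicIndex _ _)
    (dyadicCube_ae_le_dyadicIndex _ _)
  refine Disjoint.aedisjoint (disjoint_left.2 fun x hxp hxq => hpq (Subtype.ext ?_))
  rcases le_total p.1.1 q.1.1 with hle | hle
  · exact stoppingCubes_eq_of_dyadicIndex_eq p.2 q.2 hle hxp hxq
  · exact (stoppingCubes_eq_of_dyadicIndex_eq q.2 p.2 hle hxq hxp).symm

theorem ae_le_iUnion_stoppingCubes (hσ : σ < 1) (hAQ₁ : A ⊆ Icc 0 1) (hQ₁ : ¬IsHeavy A σ 0 0) :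
    A ≤ᵐ[volume] ⋃ p : stoppingCubes A σ, dyadicCube d p.1.1 p.1.2 := by
  refine (ae_restrict_iff (.iUnion fun p => measurableSet_dyadicCube _ _)).1 ?_
  have hmem : ∀ᵐ x ∂volume.restrict A, x ∈ Icc 0 1 :=
    ae_restrict_of_ae_restrict_of_subset hAQ₁ (ae_restrict_mem measurableSet_Icc)
  have hidx : ∀ᵐ x ∂volume.restrict A, x ∈ Icc 0 1 → dyadicIndex 0 x = 0 := by
    rw [← dyadicCube_zero_zero]
    exact ae_restrict_of_ae (dyadicCube_ae_le_dyadicIndex 0 0)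
  filter_upwards [hmem, hidx, ae_exists_isHeavy hσ] with x hx hx₀ hheavy
  obtain ⟨p, hp, hxp⟩ := exists_mem_stoppingCubes hx.1 (hx₀ hx) hQ₁ (hheavy hx.1)
  exact mem_iUnion.2 ⟨⟨p, hp⟩, hxp⟩

theorem dyadicCube_subset_of_mem_stoppingCubes {B : Set (Fin d → ℝ)}
    (hCZ : ∀ (n : ℕ) (m : Fin d → ℕ), (∀ i, m i < 2 ^ (n + 1)) → IsHeavy A σ (n + 1) m →
      dyadicCube d n (fun i => m i / 2) ⊆ B)
    {p : ℕ × (Fin d → ℕ)} (hp : p ∈ stoppingCubes A σ) : dyadicCube d p.1 p.2 ⊆ B := by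
  obtain ⟨⟨-, m, hm, hpm, hheavy⟩, -⟩ := hp
  exact hpm ▸ hCZ p.1 m hm hheavy

end Dyadic

theorem stmt_9_general {d : ℕ} (A B : Set (Fin d → ℝ))
    (hAB : A ⊆ B) (hBQ : B ⊆ Set.Icc 0 1)
    (σ : ℝ) (hσ1 : σ < 1)
    (hA : volume A ≤ ENNReal.ofReal σ)
    (hCZ : ∀ (n : ℕ) (m : Fin d → ℕ), (∀ i, m i < 2 ^ (n + 1)) →
      ENNReal.ofReal σ * volume (dyadicCube d (n + 1) m) <
          volume (A ∩ dyadicCube d (n + 1) m) →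
        dyadicCube d n (fun i => m i / 2) ⊆ B) :
    volume A ≤ ENNReal.ofReal σ * volume B := by
  have hAQ₁ : A ⊆ Icc 0 1 := hAB.trans hBQ
  have hQ₁ : ¬IsHeavy A σ 0 0 := by
    rw [IsHeavy, volume_dyadicCube, dyadicCube_zero_zero, inter_eq_left.2 hAQ₁]
    simpa using hA
  calc volume A ≤ ENNReal.ofReal σ * volume (⋃ p : stoppingCubes A σ, dyadicCube d p.1.1 p.1.2) :=
        measure_le_mul_measure_iUnion (fun _ => (measurableSet_dyadicCube _ _).nullMeasurableSet)
          pairwise_aedisjoint_stoppingCubes (ae_le_iUnion_stoppingCubes hσ1 hAQ₁ hQ₁)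
          fun p => not_lt.1 p.2.1.1
    _ ≤ ENNReal.ofReal σ * volume B := by
        gcongr
        exact iUnion_subset fun p => dyadicCube_subset_of_mem_stoppingCubes hCZ p.2

/-- Calderón–Zygmund cube decomposition corollary: if `A ⊆ B ⊆ Q₁` are measurable,
`|A| ≤ σ`, and every dyadic cube `Q` with `|A ∩ Q| > σ|Q|` has its predecessor `Q̃`
contained in `B`, then `|A| ≤ σ |B|`. -/
theorem stmt_9 {d : ℕ} (A B : Set (Fin d → ℝ))
    (hAmeas : MeasurableSet A) (hBmeas : MeasurableSet B)
    (hAB : A ⊆ B) (hBQ : B ⊆ Set.Icc 0 1)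
    (σ : ℝ) (hσ0 : 0 < σ) (hσ1 : σ < 1)
    (hA : volume A ≤ ENNReal.ofReal σ)
    (hCZ : ∀ (n : ℕ) (m : Fin d → ℕ), (∀ i, m i < 2 ^ (n + 1)) →
      ENNReal.ofReal σ * volume (dyadicCube d (n + 1) m) <
          volume (A ∩ dyadicCube d (n + 1) m) →
        dyadicCube d n (fun i => m i / 2) ⊆ B) :
    volume A ≤ ENNReal.ofReal σ * volume B :=
  stmt_9_general A B hAB hBQ σ hσ1 hA hCZ
end
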